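/- Let T ≥ 1 be sufficiently large, A ≥ 1 a constant, and suppose T/A ≤ r₁ < r₂ < … < r_N ≤ T, and b₁,…,b_N ∈ ℝ with |b_j| ≤ 1/Y where Y > 3A/π. Then there exists μ ∈ [0,1] such that sin(μ r_j + b_j) ≥ 1/(2T) for all 1 ≤ j ≤ N. More precisely, there exists μ ∈ [0,1] with 1/T ≤ μ r_j + b_j ≤ π − 1/T for all j. -/
import Mathlib


lemma sin_lower_aux {T x : ℝ} (hT : 2 ≤ T) (h1 : 1 / T ≤ x)
    (h2 : x ≤ Real.pi - 1 / T) : 1 / (2 * T) ≤ Real.sin x := by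
  have hT0 : (0:ℝ) < T := by linarith
  have hπ := Real.pi_pos
  have hπ4 := Real.pi_le_four
  have hx0 : 0 < 1 / T := by positivity
  have key : ∀ y : ℝ, 1 / T ≤ y → y ≤ Real.pi / 2 → 1 / (2 * T) ≤ Real.sin y := by
    intro y hy1 hy2
    have h := Real.mul_le_sin (x := y) (by linarith) hy2
    have h3 : 2 / Real.pi * (1 / T) ≤ 2 / Real.pi * y :=
      mul_le_mul_of_nonneg_left hy1 (by positivity)
    have h4 : 1 / (2 * T) ≤ 2 / Real.pi * (1 / T) := by
      rw [mul_one_div, div_div, div_le_div_iff₀ (by positivity) (by positivity)]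
      nlinarith
    linarith
  rcases le_or_gt x (Real.pi / 2) with h | h
  · exact key x h1 h
  · have := key (Real.pi - x) (by linarith) (by linarith)
    rwa [Real.sin_pi_sub] at this

/-- For `T` sufficiently large there is `μ ∈ [0,1]` with
`1/T ≤ μ r_j + b_j ≤ π − 1/T` (hence `sin(μ r_j + b_j) ≥ 1/(2T)`) for all `j`. -/
theorem stmt_10 (A Y : ℝ) (hA : 1 ≤ A) (hY : Y > 3 * A / Real.pi) :
    ∃ T₀ : ℝ, ∀ T : ℝ, T₀ ≤ T →
      ∀ (N : ℕ) (r b : Fin N → ℝ),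
        (∀ j, T / A ≤ r j ∧ r j ≤ T) →
        (∀ j, |b j| ≤ 1 / Y) →
        ∃ μ ∈ Set.Icc (0:ℝ) 1, ∀ j : Fin N,
          1 / T ≤ μ * r j + b j ∧ μ * r j + b j ≤ Real.pi - 1 / T ∧
            1 / (2 * T) ≤ Real.sin (μ * r j + b j) := by
  have hπ := Real.pi_pos
  have hA0 : (0:ℝ) < A := by linarith
  have hY0 : (0:ℝ) < Y := lt_trans (by positivity) hY
  have h3A : 3 * A < Y * Real.pi := by
    have := (div_lt_iff₀ hπ).mp hY
    linarith
  set c : ℝ := (A / Y + Real.pi) / 2 with hc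
  have hc0 : 0 < c := by positivity
  set g1 : ℝ := (Real.pi / A - 1 / Y) / 2 with hg1
  set g2 : ℝ := Real.pi / 2 - (A / 2 + 1) / Y with hg2
  have hg1pos : 0 < g1 := by
    have : 1 / Y < Real.pi / A := by
      rw [div_lt_div_iff₀ hY0 hA0]
      nlinarith
    rw [hg1]; linarith
  have hg2pos : 0 < g2 := by
    have : (A / 2 + 1) / Y < Real.pi / 2 := by
      rw [div_lt_div_iff₀ hY0 (by norm_num : (0:ℝ) < 2)]
      nlinarith
    rw [hg2]; linarith
  set ε : ℝ := min g1 g2 with hε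
  have hεpos : 0 < ε := lt_min hg1pos hg2pos
  refine ⟨max (max c (1 / ε)) 2, fun T hT N r b hr hb => ?_⟩
  have hT2 : (2:ℝ) ≤ T := le_trans (le_max_right _ _) hT
  have hT0 : (0:ℝ) < T := by linarith
  have hcT : c ≤ T := le_trans (le_trans (le_max_left _ _) (le_max_left _ _)) hT
  have hεinvT : 1 / ε ≤ T := le_trans (le_trans (le_max_right _ _) (le_max_left _ _)) hT
  have hεT : 1 / T ≤ ε := by
    rw [div_le_iff₀ hT0]
    calc (1:ℝ) = ε * (1 / ε) := by field_simp
    _ ≤ ε * T := mul_le_mul_of_nonneg_left hεinvT (le_of_lt hεpos)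
  set μ : ℝ := c / T with hμ
  have hμ0 : 0 ≤ μ := by positivity
  have hμ1 : μ ≤ 1 := by rw [hμ, div_le_one hT0]; exact hcT
  refine ⟨μ, ⟨hμ0, hμ1⟩, fun j => ?_⟩
  obtain ⟨hbl, hbu⟩ := abs_le.mp (hb j)
  obtain ⟨hrl, hru⟩ := hr j
  have hlow : c / A ≤ μ * r j := by
    have h1 : μ * (T / A) ≤ μ * r j := mul_le_mul_of_nonneg_left hrl hμ0
    have h2 : c / A = μ * (T / A) := by
      rw [hμ]; field_simp
    linarith
  have hhigh : μ * r j ≤ c := by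
    have h1 : μ * r j ≤ μ * T := mul_le_mul_of_nonneg_left hru hμ0
    have h2 : μ * T = c := by rw [hμ]; field_simp
    linarith
  have heq1 : c / A - 1 / Y = g1 := by
    rw [hc, hg1]; field_simp; ring
  have heq2 : c + 1 / Y = Real.pi - g2 := by
    rw [hc, hg2]; field_simp; ring
  have hεg1 : ε ≤ g1 := min_le_left _ _
  have hεg2 : ε ≤ g2 := min_le_right _ _
  have hL : 1 / T ≤ μ * r j + b j := by linarith
  have hU : μ * r j + b j ≤ Real.pi - 1 / T := by
    clear_value c g1 g2 ε μ
    linarith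
  exact ⟨hL, hU, sin_lower_aux hT2 hL hU⟩
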